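/- arXiv:1602.04253 — 3 statements merged into one kernel-verified Lean document; each statement's English description precedes it below -/
import Mathlib

section
/- Let f ∈ k[x_1,…,x_N] ⊆ L[x_1,…,x_N] be a polynomial with coefficients in k. If there exist c ∈ (0,1) and B ≥ A such that |f(w^{1/q^{n_i}})| ≤ c for all i ≥ B, then f(w^{1/q^{n_i}}) = 0 for all but finitely many i; in particular f vanishes identically on Z, i.e. f ∈ I(Z). -/
/-!
The coefficients of `f` lie in a finite field, so they are all fixed by `x ↦ x ^ p ^ M` for some
`M > 0`. If `i ≤ i'` and `s n_i ≡ s n_{i'} (mod M)`, applying Frobenius `e = s (n_{i'} - n_i)` times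
therefore gives `f(w^{1/q^{n_i}}) = f(w^{1/q^{n_{i'}}}) ^ p ^ e`, whence
`|f(w^{1/q^{n_i}})| ≤ c ^ p ^ e`. All but finitely many `i` share their residue class with
infinitely many `i'`, and letting `i' → ∞` forces `f(w^{1/q^{n_i}}) = 0`.
-/

open MvPolynomial

/-- The inverse of the `q^n`-power Frobenius (`q = p^s`) on a perfect ring of characteristic
`p`: the unique `q^n`-th root. -/
noncomputable def qPowRoot (p s : ℕ) (L : Type*) [CommSemiring L] [ExpChar L p]
    [PerfectRing L p] (n : ℕ) (z : L) : L :=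
  (⇑(frobeniusEquiv L p).symm)^[s * n] z

/-- The coordinatewise `q^n`-th root `w^{1/q^n}` of a tuple `w`. -/
noncomputable def wRoot (p s : ℕ) {L : Type*} [CommSemiring L] [ExpChar L p] [PerfectRing L p]
    {N : ℕ} (w : Fin N → L) (n : ℕ) : Fin N → L :=
  fun j => qPowRoot p s L n (w j)

/-- The coordinatewise `q`-power Frobenius `Φ^s` (`q = p^s`). -/
def qPowMap (p s : ℕ) {L : Type*} [Monoid L] {N : ℕ} (x : Fin N → L) : Fin N → L :=
  fun j => x j ^ p ^ s

/-- `w^{1/q^i}` for `i : ℤ`, where for negative `i` one sets `w^{1/q^i} := w^{q^{-i}}`. -/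
noncomputable def wRootZ (p s : ℕ) {L : Type*} [CommSemiring L] [ExpChar L p] [PerfectRing L p]
    {N : ℕ} (w : Fin N → L) (i : ℤ) : Fin N → L :=
  if 0 ≤ i then wRoot p s w i.toNat else fun j => w j ^ (p ^ s) ^ (-i).toNat

open Function Filter

theorem Algebra.IsAlgebraic.mem_periodicPts_pow_card {F K : Type*} [Field F] [Fintype F]
    [Field K] [Algebra F K] [Algebra.IsAlgebraic F K] (a : K) :
    a ∈ periodicPts (· ^ Fintype.card F) := by
  let E := IntermediateField.adjoin F {a}
  have : FiniteDimensional F E :=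
    IntermediateField.adjoin.finiteDimensional (Algebra.IsIntegral.isIntegral a)
  let : Fintype E := Module.fintypeOfFintype (Module.finBasis F E)
  have hfix := FiniteField.pow_card (⟨a, IntermediateField.mem_adjoin_simple_self F a⟩ : E)
  rw [Module.card_eq_pow_finrank (K := F)] at hfix
  refine mem_periodicPts.2 ⟨Module.finrank F E, Module.finrank_pos, ?_⟩
  simpa [IsPeriodicPt, IsFixedPt, pow_iterate] using congrArg Subtype.val hfix

theorem Set.Finite.exists_pos_forall_isPeriodicPt {α : Type*} {f : α → α} {s : Set α}
    (hs : s.Finite) (h : s ⊆ periodicPts f) : ∃ n > 0, ∀ x ∈ s, IsPeriodicPt f n x := by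
  refine ⟨∏ x ∈ hs.toFinset, minimalPeriod f x,
    Finset.prod_pos fun x hx => minimalPeriod_pos_of_mem_periodicPts (h (hs.mem_toFinset.1 hx)),
    fun x hx => (isPeriodicPt_minimalPeriod f x).trans_dvd ?_⟩
  exact Finset.dvd_prod_of_mem _ (hs.mem_toFinset.2 hx)

theorem MvPolynomial.eval_pow_expChar_pow {σ R : Type*} [CommSemiring R] (p : ℕ) [ExpChar R p]
    {e : ℕ} {g : MvPolynomial σ R} (hg : ∀ m, g.coeff m ^ p ^ e = g.coeff m) (x : σ → R) :
    eval x g ^ p ^ e = eval (x ^ p ^ e) g := by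
  have hmap : map (iterateFrobenius R p e) g = g := by
    ext m
    rw [coeff_map, iterateFrobenius_def, hg]
  calc eval x g ^ p ^ e = iterateFrobenius R p e (eval x g) := rfl
    _ = eval (iterateFrobenius R p e ∘ x) (map (iterateFrobenius R p e) g) := by
      simpa only [eval₂_id, RingHom.comp_id, ← eval_map, MvPolynomial.map_id] using
        eval₂_comp_left (iterateFrobenius R p e) (RingHom.id R) x g
    _ = eval (x ^ p ^ e) g := by rw [hmap]; rfl

theorem MvPolynomial.finite_range_coeff {σ R : Type*} [CommSemiring R] (f : MvPolynomial σ R) :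
    (Set.range fun m => f.coeff m).Finite :=
  ((f.support.finite_toSet.image fun m => f.coeff m).insert 0).subset <|
    Set.range_subset_iff.2 fun m => by
      by_cases hm : m ∈ f.support
      · exact Or.inr ⟨m, hm, rfl⟩
      · exact Or.inl (notMem_support_iff.1 hm)

theorem wRoot_pow_of_le (p s : ℕ) {L : Type*} [CommSemiring L] [ExpChar L p] [PerfectRing L p]
    {N : ℕ} (w : Fin N → L) {n n' : ℕ} (h : n ≤ n') :
    wRoot p s w n' ^ p ^ (s * (n' - n)) = wRoot p s w n := by
  funext j
  have hsplit : s * n' = s * (n' - n) + s * n := by rw [← Nat.mul_add, Nat.sub_add_cancel h]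
  simp only [Pi.pow_apply, wRoot, qPowRoot, hsplit, Function.iterate_add_apply,
    iterate_frobeniusEquiv_symm_pow_p_pow]

theorem eval_wRoot_eq_eval_wRoot_pow (p s : ℕ) {K L : Type*} [CommSemiring K] [CommSemiring L]
    [ExpChar L p] [PerfectRing L p] {N : ℕ} (ι : K →+* L) {f : MvPolynomial (Fin N) K} {M : ℕ}
    (hf : ∀ m, IsPeriodicPt (· ^ p) M (f.coeff m)) (w : Fin N → L) {n n' : ℕ} (h : n ≤ n')
    (hdvd : M ∣ s * (n' - n)) :
    eval (wRoot p s w n) (map ι f) = eval (wRoot p s w n') (map ι f) ^ p ^ (s * (n' - n)) := by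
  have hcoeff (m) : (map ι f).coeff m ^ p ^ (s * (n' - n)) = (map ι f).coeff m := by
    have hfix := ((hf m).trans_dvd hdvd).eq
    rw [pow_iterate] at hfix
    rw [coeff_map, ← map_pow]
    exact congrArg ι hfix
  rw [eval_pow_expChar_pow p hcoeff, wRoot_pow_of_le p s w h]

theorem StrictMono.sub_le_sub_nat {f : ℕ → ℕ} (hf : StrictMono f) {i i' : ℕ} (h : i ≤ i') :
    i' - i ≤ f i' - f i := by
  have := hf.add_le_nat (i' - i) i
  rw [Nat.sub_add_cancel h] at this
  omega

theorem eventually_cofinite_infinite_fiber {α β : Type*} {r : α → β}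
    (hr : (Set.range r).Finite) : ∀ᶠ a in cofinite, (r ⁻¹' {r a}).Infinite := by
  rw [eventually_cofinite]
  refine ((hr.subset (Set.sep_subset _ fun b => (r ⁻¹' {b}).Finite)).biUnion
    fun b hb => hb.2).subset fun a ha => ?_
  exact Set.mem_biUnion ⟨⟨a, rfl⟩, Set.not_infinite.1 ha⟩ rfl

namespace AbsoluteValue

variable {R : Type*} [Semiring R] [Nontrivial R] (v : AbsoluteValue R ℝ) {c : ℝ}

theorem eq_zero_of_forall_exists_pow_eq (hc0 : 0 ≤ c) (hc1 : c < 1) {y : R}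
    (h : ∀ n, ∃ k ≥ n, ∃ z, v z ≤ c ∧ y = z ^ k) : y = 0 := by
  refine v.eq_zero.1 (le_antisymm (ge_of_tendsto' (tendsto_pow_atTop_nhds_zero_of_lt_one hc0 hc1)
    fun n => ?_) (v.nonneg y))
  obtain ⟨k, hk, z, hz, rfl⟩ := h n
  calc v (z ^ k) = v z ^ k := map_pow v z k
    _ ≤ c ^ k := pow_le_pow_left₀ (v.nonneg z) hz k
    _ ≤ c ^ n := pow_le_pow_of_le_one hc0 hc1.le hk

theorem eventually_eq_zero_of_forall_eq_pow {β : Type*} (hc0 : 0 ≤ c) (hc1 : c < 1)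
    {y : ℕ → R} (hsmall : ∀ᶠ i in atTop, v (y i) ≤ c) {r : ℕ → β} (hr : (Set.range r).Finite)
    (hpow : ∀ i i', i ≤ i' → r i = r i' → ∃ k ≥ i' - i, y i = y i' ^ k) :
    ∀ᶠ i in atTop, y i = 0 := by
  filter_upwards [Nat.cofinite_eq_atTop ▸ eventually_cofinite_infinite_fiber hr] with i hfiber
  refine v.eq_zero_of_forall_exists_pow_eq hc0 hc1 fun n => ?_
  obtain ⟨i', hri', hsmall', hi'⟩ := (Nat.frequently_atTop_iff_infinite.2 hfiber).and_eventually
    (hsmall.and (eventually_ge_atTop (i + n))) |>.exists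
  obtain ⟨k, hk, hyk⟩ := hpow i i' (by omega) hri'.symm
  exact ⟨k, by omega, y i', hsmall', hyk⟩

end AbsoluteValue

theorem small_on_roots_implies_vanishes_on_closure_general
    (p : ℕ) [Fact p.Prime] (s : ℕ) (hs : 1 ≤ s) {N : ℕ}
    (L : Type*) [Field L] [ExpChar L p] [PerfectRing L p]
    (v : AbsoluteValue L ℝ)
    (ι : AlgebraicClosure (ZMod p) →+* L)
    (w : Fin N → L)
    (nseq : ℕ → ℕ) (hmono : StrictMono nseq)
    (A : ℕ) (Z : Set (Fin N → L))
    (hZ : ∀ n, A ≤ n → Z = {x | ∀ f : MvPolynomial (Fin N) L,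
      (∀ i, n ≤ i → MvPolynomial.eval (wRoot p s w (nseq i)) f = 0) →
        MvPolynomial.eval x f = 0})
    (f : MvPolynomial (Fin N) (AlgebraicClosure (ZMod p)))
    (c : ℝ) (hc0 : 0 < c) (hc1 : c < 1) (B : ℕ)
    (hbound : ∀ i, B ≤ i →
      v (MvPolynomial.eval (wRoot p s w (nseq i)) (MvPolynomial.map ι f)) ≤ c) :
    (∃ C, ∀ i, C ≤ i →
        MvPolynomial.eval (wRoot p s w (nseq i)) (MvPolynomial.map ι f) = 0) ∧
      ∀ x ∈ Z, MvPolynomial.eval x (MvPolynomial.map ι f) = 0 := by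
  obtain ⟨M, hM, hperiod⟩ := f.finite_range_coeff.exists_pos_forall_isPeriodicPt
    fun a _ => Algebra.IsAlgebraic.mem_periodicPts_pow_card (F := ZMod p) a
  rw [ZMod.card] at hperiod
  have hpow : ∀ i i', i ≤ i' → s * nseq i % M = s * nseq i' % M → ∃ k ≥ i' - i,
      eval (wRoot p s w (nseq i)) (map ι f) = eval (wRoot p s w (nseq i')) (map ι f) ^ k := by
    intro i i' hii' hmod
    have hle : nseq i ≤ nseq i' := hmono.monotone hii'
    refine ⟨_, ?_, eval_wRoot_eq_eval_wRoot_pow p s ι (fun m => hperiod _ ⟨m, rfl⟩) w hle ?_⟩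
    · calc i' - i ≤ nseq i' - nseq i := hmono.sub_le_sub_nat hii'
        _ ≤ s * (nseq i' - nseq i) := Nat.le_mul_of_pos_left _ hs
        _ ≤ p ^ (s * (nseq i' - nseq i)) := (Nat.lt_pow_self (Fact.out : p.Prime).one_lt).le
    · rw [Nat.mul_sub]
      exact (Nat.modEq_iff_dvd' (Nat.mul_le_mul_left s hle)).1 hmod
  obtain ⟨C, hC⟩ := eventually_atTop.1 (v.eventually_eq_zero_of_forall_eq_pow hc0.le hc1
    (eventually_atTop.2 ⟨B, hbound⟩) ((Set.finite_Iio M).subset (Set.range_subset_iff.2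
      fun i => Nat.mod_lt _ hM)) hpow)
  refine ⟨⟨C, hC⟩, fun x hx => ?_⟩
  rw [hZ (max A C) (le_max_left _ _)] at hx
  exact hx _ fun i hi => hC i (le_of_max_le_right hi)

/-- **Lemma 5.1.** Let `Z` be the Zariski closure of the tails of `{w^{1/q^{n_i}}}` and let
`f` be a polynomial with coefficients in `k = 𝔽_p-bar`. If `|f(w^{1/q^{n_i}})| ≤ c < 1` for all
`i ≥ B`, then `f(w^{1/q^{n_i}}) = 0` for all large `i`; in particular `f` vanishes on `Z`. -/
theorem small_on_roots_implies_vanishes_on_closure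
    (p : ℕ) [Fact p.Prime] (s : ℕ) (hs : 1 ≤ s) {N : ℕ}
    (L : Type*) [Field L] [IsAlgClosed L] [CharP L p] [ExpChar L p] [PerfectRing L p]
    (v : AbsoluteValue L ℝ) (hna : ∀ x y : L, v (x + y) ≤ max (v x) (v y))
    (ι : AlgebraicClosure (ZMod p) →+* L)
    (w : Fin N → L) (hw : ∀ j, v (w j) ≤ 1)
    (nseq : ℕ → ℕ) (hmono : StrictMono nseq)
    (A : ℕ) (Z : Set (Fin N → L))
    (hZ : ∀ n, A ≤ n → Z = {x | ∀ f : MvPolynomial (Fin N) L,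
      (∀ i, n ≤ i → MvPolynomial.eval (wRoot p s w (nseq i)) f = 0) →
        MvPolynomial.eval x f = 0})
    (f : MvPolynomial (Fin N) (AlgebraicClosure (ZMod p)))
    (c : ℝ) (hc0 : 0 < c) (hc1 : c < 1) (B : ℕ) (hAB : A ≤ B)
    (hbound : ∀ i, B ≤ i →
      v (MvPolynomial.eval (wRoot p s w (nseq i)) (MvPolynomial.map ι f)) ≤ c) :
    (∃ C, ∀ i, C ≤ i →
        MvPolynomial.eval (wRoot p s w (nseq i)) (MvPolynomial.map ι f) = 0) ∧
      ∀ x ∈ Z, MvPolynomial.eval x (MvPolynomial.map ι f) = 0 :=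
  small_on_roots_implies_vanishes_on_closure_general p s hs L v ι w nseq hmono A Z hZ f c hc0 hc1 B
    hbound
end

section
/- Let T be a subset of k^N and let Z ⊆ L^N be the common zero set of all polynomials in k[x_1,…,x_N] vanishing on T (the Zariski closure of T over k). Let H ∈ L[x_1,…,x_N] be a polynomial all of whose coefficients lie in L^∘, and let s be a positive integer. If |H(x)| ≤ p^{−s} for every x ∈ T, then |H(y)| ≤ p^{−s} for every y ∈ Z ∩ k^N. -/
/-!
The set `J` of elements of `L` of absolute value at most `p^{-s}` is a `k`-linear subspace of `L`,
because the absolute value is nonarchimedean and elements of `k` have absolute value at most one.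
Applying a `k`-linear functional on `L/J` to the coefficients of `H` gives a polynomial over `k`
whose value at `x ∈ k^N` is the functional applied to `H(x) mod J`. It vanishes on `T`, hence on
the Zariski closure of `T`; since these functionals separate the points of `L/J`, `H(y) ∈ J` for
every `y ∈ Z ∩ k^N`.
-/

open MvPolynomial

theorem MvPolynomial.eval_map_linearMap {K A σ : Type*} [CommSemiring K] [CommSemiring A]
    [Algebra K A] (ℓ : A →ₗ[K] K) (x : σ → K) (H : MvPolynomial σ A) :
    eval x (AddMonoidAlgebra.map ℓ.toAddMonoidHom H) = ℓ (eval (algebraMap K A ∘ x) H) := by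
  induction H using MvPolynomial.induction_on' with
  | monomial m c =>
    have hmap : AddMonoidAlgebra.map ℓ.toAddMonoidHom (monomial m c) = monomial m (ℓ c) :=
      AddMonoidAlgebra.map_single _ _ _
    rw [hmap, eval_monomial, eval_monomial, Finsupp.prod, Finsupp.prod]
    simp only [Function.comp_apply, ← map_pow, ← map_prod]
    rw [← Algebra.commutes, ← Algebra.smul_def, map_smul, smul_eq_mul, mul_comm]
  | add P Q hP hQ => simp [AddMonoidAlgebra.map_add, hP, hQ]

theorem MvPolynomial.eval_algebraMap_mem_of_mem_zeroLocus_vanishingIdeal {K A σ : Type*}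
    [Field K] [CommRing A] [Algebra K A] (J : Submodule K A) {T : Set (σ → K)}
    (H : MvPolynomial σ A) (hT : ∀ x ∈ T, eval (algebraMap K A ∘ x) H ∈ J) {a : σ → K}
    (ha : a ∈ zeroLocus K (vanishingIdeal K T)) :
    eval (algebraMap K A ∘ a) H ∈ J := by
  rw [← Submodule.Quotient.mk_eq_zero, ← Module.forall_dual_apply_eq_zero_iff K]
  intro ℓ
  have hvanish : AddMonoidAlgebra.map (ℓ ∘ₗ J.mkQ).toAddMonoidHom H ∈ vanishingIdeal K T := by
    intro x hx
    rw [aeval_eq_eval, eval_map_linearMap]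
    simp [(Submodule.Quotient.mk_eq_zero J).2 (hT x hx)]
  simpa [aeval_eq_eval, eval_map_linearMap] using ha _ hvanish

def AbsoluteValue.closedBallSubmodule {K L : Type*} [CommSemiring K] [Semiring L] [Algebra K L]
    (v : AbsoluteValue L ℝ) (hna : IsNonarchimedean v)
    (hK : ∀ c : K, v (algebraMap K L c) ≤ 1) {r : ℝ} (hr : 0 ≤ r) : Submodule K L where
  carrier := {z | v z ≤ r}
  zero_mem' := by simpa using hr
  add_mem' {x y} hx hy := (hna x y).trans (max_le hx hy)
  smul_mem' c z hz := by
    simp only [Set.mem_ofPred_eq, Algebra.smul_def, map_mul]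
    exact (mul_le_of_le_one_left (v.nonneg z) (hK c)).trans hz

theorem small_on_dense_subset_implies_small_on_closure_general
    (p : ℕ) [Fact p.Prime] {N : ℕ}
    (L : Type*) [Field L]
    (v : AbsoluteValue L ℝ) (hna : ∀ x y : L, v (x + y) ≤ max (v x) (v y))
    (ι : AlgebraicClosure (ZMod p) →+* L)
    (hι : ∀ a : AlgebraicClosure (ZMod p), a ≠ 0 → v (ι a) = 1)
    (T : Set (Fin N → AlgebraicClosure (ZMod p)))
    (Z : Set (Fin N → L))
    (hZ : Z = {x | ∀ f : MvPolynomial (Fin N) (AlgebraicClosure (ZMod p)),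
      (∀ y ∈ T, MvPolynomial.eval y f = 0) → MvPolynomial.eval x (MvPolynomial.map ι f) = 0})
    (H : MvPolynomial (Fin N) L)
    (s : ℕ)
    (hsmall : ∀ x ∈ T, v (MvPolynomial.eval (fun j => ι (x j)) H) ≤ ((p : ℝ) ^ s)⁻¹) :
    ∀ y ∈ Z, (∀ j, ∃ a : AlgebraicClosure (ZMod p), ι a = y j) →
      v (MvPolynomial.eval y H) ≤ ((p : ℝ) ^ s)⁻¹ := by
  intro y hy hyk
  choose a hya using hyk
  obtain rfl : y = fun j => ι (a j) := funext fun j => (hya j).symm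
  rw [hZ] at hy
  let := ι.toAlgebra
  have hk : ∀ c, v (ι c) ≤ 1 := fun c => by
    rcases eq_or_ne c 0 with rfl | hc
    · simp
    · exact (hι c hc).le
  have ha : a ∈ zeroLocus (AlgebraicClosure (ZMod p)) (vanishingIdeal _ T) := fun f hf =>
    ι.injective <| by
      rw [aeval_eq_eval, map_eval, map_zero]
      exact hy f hf
  exact eval_algebraMap_mem_of_mem_zeroLocus_vanishingIdeal
    (v.closedBallSubmodule hna hk (by positivity)) H hsmall ha

/-- **Lemma 4.8.** Let `k = 𝔽_p-bar ⊆ L`, `T ⊆ k^N`, and let `Z` be the Zariski closure of `T`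
over `k` in `L^N`. If `H` is a polynomial over the valuation ring `L^∘` with `|H(x)| ≤ p^{-s}`
for all `x ∈ T`, then `|H(y)| ≤ p^{-s}` for all `y ∈ Z ∩ k^N`. -/
theorem small_on_dense_subset_implies_small_on_closure
    (p : ℕ) [Fact p.Prime] {N : ℕ}
    (L : Type*) [Field L] [IsAlgClosed L] [CharP L p]
    (v : AbsoluteValue L ℝ) (hna : ∀ x y : L, v (x + y) ≤ max (v x) (v y))
    (ι : AlgebraicClosure (ZMod p) →+* L)
    (hι : ∀ a : AlgebraicClosure (ZMod p), a ≠ 0 → v (ι a) = 1)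
    (t : L) (ht : v t = (p : ℝ)⁻¹)
    (T : Set (Fin N → AlgebraicClosure (ZMod p)))
    (Z : Set (Fin N → L))
    (hZ : Z = {x | ∀ f : MvPolynomial (Fin N) (AlgebraicClosure (ZMod p)),
      (∀ y ∈ T, MvPolynomial.eval y f = 0) → MvPolynomial.eval x (MvPolynomial.map ι f) = 0})
    (H : MvPolynomial (Fin N) L) (hH : ∀ m, v (H.coeff m) ≤ 1)
    (s : ℕ) (hs : 1 ≤ s)
    (hsmall : ∀ x ∈ T, v (MvPolynomial.eval (fun j => ι (x j)) H) ≤ ((p : ℝ) ^ s)⁻¹) :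
    ∀ y ∈ Z, (∀ j, ∃ a : AlgebraicClosure (ZMod p), ι a = y j) →
      v (MvPolynomial.eval y H) ≤ ((p : ℝ) ^ s)⁻¹ :=
  small_on_dense_subset_implies_small_on_closure_general p L v hna ι hι T Z hZ H s hsmall
end

section
/- The reduction map red : ℙ^N(ℂ_p) → ℙ^N(k̄) restricts to a bijection from the set Per of F-periodic points onto ℙ^N(k̄); equivalently, for every y ∈ ℙ^N(k̄) the fiber red^{−1}(y) contains exactly one F-periodic point. -/
open scoped LinearAlgebra.Projectivization
open MvPolynomial

/-- `K` is a model of `ℂ_p`: a complete algebraically closed nonarchimedean normed field,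
isometrically extending `ℚ_p`, in which the algebraic elements over `ℚ_p` are dense
(so that `K` is the completion of an algebraic closure of `ℚ_p`). -/
structure IsCp (p : ℕ) [Fact p.Prime] (K : Type*) [NormedField K] [Algebra ℚ_[p] K] : Prop where
  nonarch : ∀ x y : K, ‖x + y‖ ≤ max ‖x‖ ‖y‖
  isometry : ∀ a : ℚ_[p], ‖algebraMap ℚ_[p] K a‖ = ‖a‖
  algClosed : IsAlgClosed K
  complete : CompleteSpace K
  denseAlgebraic : ∀ (x : K) (ε : ℝ), 0 < ε → ∃ y : K, IsAlgebraic ℚ_[p] y ∧ ‖x - y‖ < ε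

/-- A homogeneous polynomial vanishes at a projective point (tested on any representative). -/
def VanishesAt {K : Type*} [Field K] {N : ℕ} (H : MvPolynomial (Fin (N + 1)) K)
    (x : ℙ K (Fin (N + 1) → K)) : Prop :=
  ∀ (v : Fin (N + 1) → K) (hv : v ≠ 0), x = Projectivization.mk K v hv →
    MvPolynomial.eval v H = 0

/-- A subvariety of `ℙ^N` is the common zero set of finitely many homogeneous polynomials. -/
def IsSubvariety {K : Type*} [Field K] {N : ℕ} (V : Set (ℙ K (Fin (N + 1) → K))) : Prop :=
  ∃ (m : ℕ) (H : Fin m → MvPolynomial (Fin (N + 1)) K),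
    (∀ j, ∃ d, (H j).IsHomogeneous d) ∧ V = {x | ∀ j, VanishesAt (H j) x}

/-- `S` is Zariski dense in `V`: `S ⊆ V` and every homogeneous polynomial vanishing on `S`
vanishes on `V`. -/
def ZariskiDenseIn {K : Type*} [Field K] {N : ℕ} (S V : Set (ℙ K (Fin (N + 1) → K))) : Prop :=
  S ⊆ V ∧ ∀ (H : MvPolynomial (Fin (N + 1)) K) (d : ℕ), H.IsHomogeneous d →
    (∀ x ∈ S, VanishesAt H x) → ∀ x ∈ V, VanishesAt H x

/-- An irreducible subvariety: nonempty and not the union of two proper subvarieties of it. -/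
def IsIrreducibleSubvariety {K : Type*} [Field K] {N : ℕ}
    (V : Set (ℙ K (Fin (N + 1) → K))) : Prop :=
  IsSubvariety V ∧ V.Nonempty ∧
    ¬ ∃ V₁ V₂ : Set (ℙ K (Fin (N + 1) → K)), IsSubvariety V₁ ∧ IsSubvariety V₂ ∧
      V₁ ⊆ V ∧ V₂ ⊆ V ∧ V₁ ≠ V ∧ V₂ ≠ V ∧ V = V₁ ∪ V₂

/-- A polynomial has Gauss norm one: all coefficients have norm `≤ 1` and some coefficient
has norm `1`. -/
def GaussNormOne {K : Type*} [NormedField K] {n : ℕ} (H : MvPolynomial (Fin n) K) : Prop :=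
  (∀ m, ‖H.coeff m‖ ≤ 1) ∧ ∃ m, ‖H.coeff m‖ = 1

/-- A vector of sup-norm one (the normalized homogeneous coordinates of a projective point). -/
def UnitRep {K : Type*} [NormedField K] {n : ℕ} (v : Fin n → K) : Prop :=
  (∀ i, ‖v i‖ ≤ 1) ∧ ∃ i, ‖v i‖ = 1

/-- `x ∈ ℙ^N(ℂ_p)` reduces to `y ∈ ℙ^N(k̄)`: some homogeneous coordinates of `x` of sup-norm one
map coordinatewise, under the residue map `res` on the valuation ring `O`, to homogeneous
coordinates of `y`. -/
def RedTo {K : Type*} [NormedField K] {N : ℕ} {kbar : Type*} [Field kbar]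
    (O : Subring K) (hO : ∀ z : K, z ∈ O ↔ ‖z‖ ≤ 1) (res : O →+* kbar)
    (x : ℙ K (Fin (N + 1) → K)) (y : ℙ kbar (Fin (N + 1) → kbar)) : Prop :=
  ∃ (v : Fin (N + 1) → K) (hv : v ≠ 0) (hle : ∀ i, ‖v i‖ ≤ 1),
    (∃ i, ‖v i‖ = 1) ∧ x = Projectivization.mk K v hv ∧
      ∃ hw : (fun i => res ⟨v i, (hO (v i)).mpr (hle i)⟩) ≠ 0,
        y = Projectivization.mk kbar (fun i => res ⟨v i, (hO (v i)).mpr (hle i)⟩) hw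

/-!
In the affine chart `vᵢ₀ = 1` of the closed unit polydisc, the lift of Frobenius becomes a
self-map `G` with `‖G u - G v‖ ≤ max ‖p‖ ‖u - v‖ · ‖u - v‖`: the coordinate polynomials are
`Xᵢ^q` modulo `p`, and `x^q - y^q = (x - y)(q x^(q-1) + O(x - y))`. Points with the same
reduction are exactly the points at distance `< 1`, and on reductions `G` acts as `w ↦ w^q`.
Since the residue field is algebraic over `𝔽_p`, every `w ∈ ℙ^N(k̄)` is fixed by some power
`q^n`, so `G^[n]` maps the residue disc over `w` into itself and contracts small balls in it:
Banach's fixed point theorem gives a periodic point over `w`. Two periodic points over `w` are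
fixed by a common iterate of `G`, which strictly decreases their distance unless it is `0`.
-/

lemma norm_pow_le_one {R : Type*} [SeminormedRing R] [NormOneClass R] {x : R} (hx : ‖x‖ ≤ 1)
    (n : ℕ) : ‖x ^ n‖ ≤ 1 :=
  (norm_pow_le x n).trans (pow_le_one₀ (norm_nonneg _) hx)

namespace IsUltrametricDist

variable {R : Type*} [NormedCommRing R] [NormOneClass R] [IsUltrametricDist R]

lemma norm_prod_sub_prod_le {ι : Type*} (s : Finset ι) {a b : ι → R} {d : ℝ} (hd : 0 ≤ d)
    (ha : ∀ i ∈ s, ‖a i‖ ≤ 1) (hb : ∀ i ∈ s, ‖b i‖ ≤ 1) (hab : ∀ i ∈ s, ‖a i - b i‖ ≤ d) :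
    ‖∏ i ∈ s, a i - ∏ i ∈ s, b i‖ ≤ d := by
  classical
  induction s using Finset.induction_on with
  | empty => simpa using hd
  | insert j s hj ih =>
    simp only [Finset.forall_mem_insert] at ha hb hab
    have hprod : ‖∏ i ∈ s, b i‖ ≤ 1 :=
      (Finset.norm_prod_le _ _).trans (Finset.prod_le_one (fun _ _ ↦ norm_nonneg _) hb.2)
    rw [Finset.prod_insert hj, Finset.prod_insert hj,
      show a j * ∏ i ∈ s, a i - b j * ∏ i ∈ s, b i
        = a j * (∏ i ∈ s, a i - ∏ i ∈ s, b i) + (a j - b j) * ∏ i ∈ s, b i by ring]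
    refine (norm_add_le_max _ _).trans (max_le ?_ ?_)
    · exact (norm_mul_le _ _).trans
        ((mul_le_of_le_one_left (norm_nonneg _) ha.1).trans (ih ha.2 hb.2 hab.2))
    · exact (norm_mul_le _ _).trans ((mul_le_of_le_one_right (norm_nonneg _) hprod).trans hab.1)

lemma norm_pow_sub_pow_le {x y : R} (hx : ‖x‖ ≤ 1) (hy : ‖y‖ ≤ 1) (n : ℕ) :
    ‖x ^ n - y ^ n‖ ≤ ‖x - y‖ := by
  simpa using norm_prod_sub_prod_le (Finset.range n) (a := fun _ ↦ x) (b := fun _ ↦ y)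
    (norm_nonneg _) (fun _ _ ↦ hx) (fun _ _ ↦ hy) (fun _ _ ↦ le_rfl)

lemma norm_pow_sub_pow_le_max_mul {x y : R} (hx : ‖x‖ ≤ 1) (hy : ‖y‖ ≤ 1) (n : ℕ) :
    ‖x ^ n - y ^ n‖ ≤ max ‖(n : R)‖ ‖x - y‖ * ‖x - y‖ := by
  rw [← geom_sum₂_mul]
  refine (norm_mul_le _ _).trans (mul_le_mul_of_nonneg_right ?_ (norm_nonneg _))
  -- the geometric sum is `n xⁿ⁻¹` up to an error of size `‖x - y‖`
  have hsplit : ∑ i ∈ Finset.range n, x ^ i * y ^ (n - 1 - i)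
      = ∑ i ∈ Finset.range n, x ^ i * (y ^ (n - 1 - i) - x ^ (n - 1 - i))
        + (n : R) * x ^ (n - 1) := by
    rw [show (n : R) * x ^ (n - 1) = ∑ _i ∈ Finset.range n, x ^ (n - 1) by simp,
      ← Finset.sum_add_distrib]
    refine Finset.sum_congr rfl fun i hi ↦ ?_
    rw [mul_sub, ← pow_add, Nat.add_sub_cancel' (Nat.le_sub_one_of_lt (Finset.mem_range.1 hi)),
      sub_add_cancel]
  rw [hsplit]
  refine (norm_add_le_max _ _).trans (max_le ?_ ?_)
  · refine norm_sum_le_of_forall_le_of_nonneg (by positivity) fun i _ ↦ ?_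
    refine (norm_mul_le _ _).trans ((mul_le_of_le_one_left (norm_nonneg _)
      (norm_pow_le_one hx i)).trans ?_)
    rw [norm_sub_rev]
    exact (norm_pow_sub_pow_le hx hy _).trans (le_max_right _ _)
  · exact (norm_mul_le _ _).trans ((mul_le_of_le_one_right (norm_nonneg _)
      (norm_pow_le_one hx _)).trans (le_max_left _ _))

variable {σ : Type*} [Fintype σ]

lemma norm_eval_sub_eval_le {H : MvPolynomial σ R} (hH : ∀ m, ‖H.coeff m‖ ≤ 1) {u v : σ → R}
    (hu : ‖u‖ ≤ 1) (hv : ‖v‖ ≤ 1) : ‖eval u H - eval v H‖ ≤ ‖u - v‖ := by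
  have hu' i : ‖u i‖ ≤ 1 := (norm_le_pi_norm u i).trans hu
  have hv' i : ‖v i‖ ≤ 1 := (norm_le_pi_norm v i).trans hv
  rw [eval_eq', eval_eq', ← Finset.sum_sub_distrib]
  refine norm_sum_le_of_forall_le_of_nonneg (norm_nonneg _) fun m _ ↦ ?_
  rw [← mul_sub]
  refine (norm_mul_le _ _).trans ((mul_le_of_le_one_left (norm_nonneg _) (hH m)).trans ?_)
  exact norm_prod_sub_prod_le _ (norm_nonneg _) (fun i _ ↦ norm_pow_le_one (hu' i) _)
    (fun i _ ↦ norm_pow_le_one (hv' i) _)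
    fun i _ ↦ (norm_pow_sub_pow_le (hu' i) (hv' i) _).trans (norm_le_pi_norm (u - v) i)

lemma norm_eval_le_one {H : MvPolynomial σ R} (hH : ∀ m, ‖H.coeff m‖ ≤ 1) {v : σ → R}
    (hv : ‖v‖ ≤ 1) : ‖eval v H‖ ≤ 1 := by
  have h := norm_eval_sub_eval_le hH hv (norm_zero.trans_le zero_le_one)
  rw [eval_zero, constantCoeff_eq, sub_zero] at h
  simpa using (norm_add_le_max _ _).trans (max_le (h.trans hv) (hH 0))

end IsUltrametricDist

def ShrinksSmallDist {X : Type*} [MetricSpace X] (r : ℝ) (f : X → X) : Prop :=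
  ∀ x y, dist x y < 1 → dist (f x) (f y) ≤ max r (dist x y) * dist x y

namespace ShrinksSmallDist

open Function Set

variable {X : Type*} [MetricSpace X] {r : ℝ} {f g : X → X}

lemma dist_le (hf : ShrinksSmallDist r f) (hr : r ≤ 1) {x y : X} (h : dist x y < 1) :
    dist (f x) (f y) ≤ dist x y :=
  (hf x y h).trans (mul_le_of_le_one_left dist_nonneg (max_le hr h.le))

lemma comp (hf : ShrinksSmallDist r f) (hg : ShrinksSmallDist r g) (hr : r ≤ 1) :
    ShrinksSmallDist r (f ∘ g) := by
  intro x y h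
  have hgxy := hg.dist_le hr h
  calc dist (f (g x)) (f (g y)) ≤ max r (dist (g x) (g y)) * dist (g x) (g y) :=
        hf _ _ (hgxy.trans_lt h)
    _ ≤ max r (dist x y) * (max r (dist x y) * dist x y) :=
        mul_le_mul (max_le_max le_rfl hgxy) (hg x y h) dist_nonneg
          (le_max_of_le_right dist_nonneg)
    _ ≤ max r (dist x y) * dist x y :=
        mul_le_mul_of_nonneg_left (mul_le_of_le_one_left dist_nonneg (max_le hr h.le))
          (le_max_of_le_right dist_nonneg)

lemma iterate (hf : ShrinksSmallDist r f) (hr : r ≤ 1) {n : ℕ} (hn : n ≠ 0) :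
    ShrinksSmallDist r f^[n] := by
  induction n with
  | zero => exact absurd rfl hn
  | succ n ih =>
    rcases eq_or_ne n 0 with rfl | hn
    · simpa using hf
    · rw [iterate_succ']
      exact hf.comp (ih hn) hr

lemma eq_of_isFixedPt (hf : ShrinksSmallDist r f) (hr : r < 1) {x y : X} (hx : IsFixedPt f x)
    (hy : IsFixedPt f y) (h : dist x y < 1) : x = y := by
  by_contra hxy
  have := hf x y h
  rw [hx.eq, hy.eq] at this
  exact (mul_lt_of_lt_one_left (dist_pos.2 hxy) (max_lt hr h)).not_ge this

lemma exists_isFixedPt [CompleteSpace X] [IsUltrametricDist X] (hf : ShrinksSmallDist r f)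
    (hr : r < 1) {t : X} (ht : dist (f t) t < 1) : ∃ x, IsFixedPt f x ∧ dist x t < 1 := by
  -- on the ball of radius `δ = dist (f t) t` around `t`, `f` contracts by the factor `max r δ`
  set δ := dist (f t) t
  have hsmall : ∀ x ∈ Metric.closedBall t δ, ∀ y ∈ Metric.closedBall t δ, dist x y ≤ δ :=
    fun x hx y hy ↦ (dist_triangle_max x t y).trans (max_le hx (dist_comm t y ▸ hy))
  have hmaps : MapsTo f (Metric.closedBall t δ) (Metric.closedBall t δ) := fun x hx ↦
    (dist_triangle_max (f x) (f t) t).trans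
      (max_le ((hf.dist_le hr.le ((hx : dist x t ≤ δ).trans_lt ht)).trans hx) le_rfl)
  have hcontr : ContractingWith ⟨max r δ, le_max_of_le_right dist_nonneg⟩
      (hmaps.restrict f _ _) := by
    refine ⟨max_lt hr ht, LipschitzWith.of_dist_le_mul fun x y ↦ ?_⟩
    have hxy := hsmall x x.2 y y.2
    exact (hf x y (hxy.trans_lt ht)).trans
      (mul_le_mul_of_nonneg_right (max_le_max le_rfl hxy) dist_nonneg)
  obtain ⟨x, hx, hfix, -⟩ := hcontr.exists_fixedPoint' Metric.isClosed_closedBall.isComplete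
    hmaps (Metric.mem_closedBall_self dist_nonneg) (edist_ne_top _ _)
  exact ⟨x, hfix, (hx : dist x t ≤ δ).trans_lt ht⟩

end ShrinksSmallDist

section FrobeniusLift

open IsUltrametricDist

variable {R : Type*} [NormedCommRing R] [NormOneClass R] [IsUltrametricDist R]
  {σ : Type*} [Fintype σ]

noncomputable def frobeniusLift (q : ℕ) (π : R) (P : σ → MvPolynomial σ R) (v : σ → R) :
    σ → R :=
  fun i ↦ v i ^ q + π * eval v (P i)

variable {q : ℕ} {π : R} {P : σ → MvPolynomial σ R}

lemma norm_frobeniusLift_le (hπ : ‖π‖ ≤ 1) (hP : ∀ i m, ‖(P i).coeff m‖ ≤ 1) {v : σ → R}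
    (hv : ‖v‖ ≤ 1) : ‖frobeniusLift q π P v‖ ≤ 1 := by
  refine (pi_norm_le_iff_of_nonneg zero_le_one).2 fun i ↦
    (norm_add_le_max _ _).trans (max_le ?_ ?_)
  · exact norm_pow_le_one ((norm_le_pi_norm v i).trans hv) q
  · exact (norm_mul_le _ _).trans (mul_le_one₀ hπ (norm_nonneg _) (norm_eval_le_one (hP i) hv))

lemma norm_frobeniusLift_sub_le {r : ℝ} (hq : ‖(q : R)‖ ≤ r) (hπ : ‖π‖ ≤ r)
    (hP : ∀ i m, ‖(P i).coeff m‖ ≤ 1) {u v : σ → R} (hu : ‖u‖ ≤ 1) (hv : ‖v‖ ≤ 1) :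
    ‖frobeniusLift q π P u - frobeniusLift q π P v‖ ≤ max r ‖u - v‖ * ‖u - v‖ := by
  have hd : ∀ i, ‖u i - v i‖ ≤ ‖u - v‖ := norm_le_pi_norm (u - v)
  have hc : 0 ≤ max r ‖u - v‖ := le_max_of_le_right (norm_nonneg _)
  refine (pi_norm_le_iff_of_nonneg (mul_nonneg hc (norm_nonneg _))).2 fun i ↦ ?_
  rw [Pi.sub_apply, show frobeniusLift q π P u i - frobeniusLift q π P v i
    = (u i ^ q - v i ^ q) + π * (eval u (P i) - eval v (P i)) by simp only [frobeniusLift]; ring]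
  refine (norm_add_le_max _ _).trans (max_le ?_ ?_)
  · exact (norm_pow_sub_pow_le_max_mul ((norm_le_pi_norm u i).trans hu)
      ((norm_le_pi_norm v i).trans hv) q).trans
      (mul_le_mul (max_le_max hq (hd i)) (hd i) (norm_nonneg _) hc)
  · exact (norm_mul_le _ _).trans (mul_le_mul (hπ.trans (le_max_left _ _))
      (norm_eval_sub_eval_le (hP i) hu hv) (norm_nonneg _) hc)

end FrobeniusLift

section Chart

open Function Set IsUltrametricDist

variable {K : Type*} [NormedField K] {σ : Type*} [Fintype σ]

variable (K) in
def unitChart (i₀ : σ) : Set (σ → K) := {v | v i₀ = 1 ∧ ‖v‖ ≤ 1}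

lemma isClosed_unitChart (i₀ : σ) : IsClosed (unitChart K i₀) :=
  (isClosed_eq (continuous_apply i₀) continuous_const).inter
    (isClosed_le continuous_norm continuous_const)

instance [CompleteSpace K] (i₀ : σ) : CompleteSpace (unitChart K i₀) :=
  (isClosed_unitChart i₀).completeSpace_coe

def unitChart.toProj {i₀ : σ} (v : unitChart K i₀) : ℙ K (σ → K) :=
  Projectivization.mk K v.1 fun h ↦ one_ne_zero (v.2.1.symm.trans (congrFun h i₀))

lemma unitChart.toProj_injective (i₀ : σ) :
    Injective (unitChart.toProj : unitChart K i₀ → ℙ K (σ → K)) := by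
  intro u v h
  obtain ⟨a, ha⟩ := (Projectivization.mk_eq_mk_iff' K _ _ _ _).1 h
  obtain rfl : a = 1 := by simpa [u.2.1, v.2.1] using congrFun ha i₀
  exact Subtype.ext (by simpa using ha.symm)

lemma norm_inv_smul_sub_inv_smul_le [IsUltrametricDist K] {a b : σ → K} (i₀ : σ)
    (ha₀ : ‖a i₀‖ = 1) (hb₀ : ‖b i₀‖ = 1) (hb : ‖b‖ ≤ 1) :
    ‖(a i₀)⁻¹ • a - (b i₀)⁻¹ • b‖ ≤ ‖a - b‖ := by
  rw [show (a i₀)⁻¹ • a - (b i₀)⁻¹ • b = (a i₀)⁻¹ • (a - b) + ((a i₀)⁻¹ - (b i₀)⁻¹) • b by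
    rw [smul_sub, sub_smul]; abel]
  refine (norm_add_le_max _ _).trans (max_le ?_ ?_)
  · rw [norm_smul, norm_inv, ha₀, inv_one, one_mul]
  · rw [norm_smul, ← dist_eq_norm, dist_inv_inv₀ (norm_ne_zero_iff.1 (ha₀ ▸ one_ne_zero))
      (norm_ne_zero_iff.1 (hb₀ ▸ one_ne_zero)), ha₀, hb₀, mul_one, div_one, dist_eq_norm]
    exact (mul_le_of_le_one_right (norm_nonneg _) hb).trans (norm_le_pi_norm (a - b) i₀)

variable [IsUltrametricDist K] {q : ℕ} {π : K} {P : σ → MvPolynomial σ K}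

lemma norm_frobeniusLift_apply_eq_one (hπ : ‖π‖ < 1) (hP : ∀ i m, ‖(P i).coeff m‖ ≤ 1)
    {v : σ → K} (hv : ‖v‖ ≤ 1) {i : σ} (hi : ‖v i‖ = 1) : ‖frobeniusLift q π P v i‖ = 1 := by
  have hlt : ‖π * eval v (P i)‖ < ‖v i ^ q‖ := by
    rw [norm_mul, norm_pow, hi, one_pow]
    exact mul_lt_one_of_nonneg_of_lt_one_left (norm_nonneg _) hπ (norm_eval_le_one (hP i) hv)
  rw [frobeniusLift, norm_add_eq_max_of_norm_ne_norm hlt.ne', max_eq_left hlt.le, norm_pow, hi,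
    one_pow]

noncomputable def chartFrobeniusLift (i₀ : σ) (q : ℕ) (π : K) (P : σ → MvPolynomial σ K)
    (v : σ → K) : σ → K :=
  (frobeniusLift q π P v i₀)⁻¹ • frobeniusLift q π P v

lemma mapsTo_chartFrobeniusLift (hπ : ‖π‖ < 1) (hP : ∀ i m, ‖(P i).coeff m‖ ≤ 1) (i₀ : σ) :
    MapsTo (chartFrobeniusLift i₀ q π P) (unitChart K i₀) (unitChart K i₀) := by
  rintro v ⟨hv₀, hv⟩
  have h₀ := norm_frobeniusLift_apply_eq_one (q := q) hπ hP hv (by rw [hv₀, norm_one])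
  refine ⟨inv_mul_cancel₀ (norm_ne_zero_iff.1 (h₀ ▸ one_ne_zero)), ?_⟩
  rw [chartFrobeniusLift, norm_smul, norm_inv, h₀, inv_one, one_mul]
  exact norm_frobeniusLift_le hπ.le hP hv

lemma shrinksSmallDist_chartFrobeniusLift {r : ℝ} (hq : ‖(q : K)‖ ≤ r) (hπr : ‖π‖ ≤ r)
    (hπ : ‖π‖ < 1) (hP : ∀ i m, ‖(P i).coeff m‖ ≤ 1) (i₀ : σ) :
    ShrinksSmallDist r ((mapsTo_chartFrobeniusLift (q := q) hπ hP i₀).restrict _ _ _) := by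
  rintro ⟨u, hu₀, hu⟩ ⟨v, hv₀, hv⟩ -
  simp only [Subtype.dist_eq, MapsTo.val_restrict_apply, dist_eq_norm]
  exact (norm_inv_smul_sub_inv_smul_le i₀
    (norm_frobeniusLift_apply_eq_one hπ hP hu (by rw [hu₀, norm_one]))
    (norm_frobeniusLift_apply_eq_one hπ hP hv (by rw [hv₀, norm_one]))
    (norm_frobeniusLift_le hπ.le hP hv)).trans (norm_frobeniusLift_sub_le hq hπr hP hu hv)

lemma semiconj_toProj_chartFrobeniusLift {F : ℙ K (σ → K) → ℙ K (σ → K)}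
    {hFnz : ∀ v : σ → K, v ≠ 0 → frobeniusLift q π P v ≠ 0}
    (hF : ∀ v (hv : v ≠ 0), F (Projectivization.mk K v hv) =
      Projectivization.mk K (frobeniusLift q π P v) (hFnz v hv))
    (hπ : ‖π‖ < 1) (hP : ∀ i m, ‖(P i).coeff m‖ ≤ 1) (i₀ : σ) :
    Semiconj unitChart.toProj ((mapsTo_chartFrobeniusLift (q := q) hπ hP i₀).restrict _ _ _)
      F := by
  rintro ⟨v, hv⟩
  rw [unitChart.toProj, unitChart.toProj, hF, Projectivization.mk_eq_mk_iff']
  exact ⟨_, rfl⟩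

end Chart

section Residue

variable {K : Type*} [NormedField K] {k : Type*} [Field k] (O : Subring K) (res : O →+* k)

open scoped Classical in
/-- The residue of an element of `O`, with junk value `0` outside `O`. -/
noncomputable def residue (z : K) : k := if h : z ∈ O then res ⟨z, h⟩ else 0

variable {O res}

lemma residue_of_mem {z : K} (h : z ∈ O) : residue O res z = res ⟨z, h⟩ := dif_pos h

lemma residue_one : residue O res 1 = 1 := by
  rw [residue_of_mem (one_mem O), ← map_one res]
  rfl

lemma residue_mul {x y : K} (hx : x ∈ O) (hy : y ∈ O) :
    residue O res (x * y) = residue O res x * residue O res y := by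
  rw [residue_of_mem hx, residue_of_mem hy, residue_of_mem (O.mul_mem hx hy), ← map_mul]
  rfl

lemma residue_pow {x : K} (hx : x ∈ O) (n : ℕ) : residue O res (x ^ n) = residue O res x ^ n := by
  rw [residue_of_mem hx, residue_of_mem (O.pow_mem hx n), ← map_pow]
  rfl

lemma residue_inv (hO : ∀ z : K, z ∈ O ↔ ‖z‖ ≤ 1) {x : K} (hx : ‖x‖ = 1) :
    residue O res x⁻¹ = (residue O res x)⁻¹ := by
  refine eq_inv_of_mul_eq_one_left ?_
  rw [← residue_mul ((hO _).2 (by rw [norm_inv, hx, inv_one])) ((hO _).2 hx.le),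
    inv_mul_cancel₀ (norm_ne_zero_iff.1 (hx ▸ one_ne_zero)), residue_one]

lemma residue_eq_residue_iff (hres_ker : ∀ z : O, res z = 0 ↔ ‖(z : K)‖ < 1) {x y : K}
    (hx : x ∈ O) (hy : y ∈ O) : residue O res x = residue O res y ↔ ‖x - y‖ < 1 := by
  rw [residue_of_mem hx, residue_of_mem hy, ← sub_eq_zero, ← map_sub, hres_ker]
  rfl

lemma residue_comp_eq_iff_dist_lt_one (hO : ∀ z : K, z ∈ O ↔ ‖z‖ ≤ 1)
    (hres_ker : ∀ z : O, res z = 0 ↔ ‖(z : K)‖ < 1) {σ : Type*} [Fintype σ] {u v : σ → K}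
    (hu : ‖u‖ ≤ 1) (hv : ‖v‖ ≤ 1) : residue O res ∘ u = residue O res ∘ v ↔ dist u v < 1 := by
  rw [dist_pi_lt_iff one_pos, _root_.funext_iff]
  refine forall_congr' fun i ↦ ?_
  rw [Function.comp_apply, Function.comp_apply, dist_eq_norm, residue_eq_residue_iff hres_ker
    ((hO _).2 ((norm_le_pi_norm u i).trans hu)) ((hO _).2 ((norm_le_pi_norm v i).trans hv))]

end Residue

lemma Projectivization.exists_eq_mk_apply_eq_one {k σ : Type*} [Field k] (y : ℙ k (σ → k)) :
    ∃ (i₀ : σ) (w : σ → k) (hw : w ≠ 0), w i₀ = 1 ∧ y = Projectivization.mk k w hw := by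
  induction y using Projectivization.ind with | h v hv =>
  obtain ⟨i₀, hi₀⟩ := Function.ne_iff.1 hv
  exact ⟨i₀, (v i₀)⁻¹ • v, smul_ne_zero (inv_ne_zero hi₀) hv, inv_mul_cancel₀ hi₀,
    (mk_eq_mk_iff' k _ _ _ _).2 ⟨v i₀, by rw [smul_smul, mul_inv_cancel₀ hi₀, one_smul]⟩⟩

section ChartResidue

open Function Set

variable {K : Type*} [NormedField K] {k : Type*} [Field k] {O : Subring K} {res : O →+* k}
  (hO : ∀ z : K, z ∈ O ↔ ‖z‖ ≤ 1) {σ : Type*} [Fintype σ]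

include hO in
lemma exists_residue_comp_eq (hres_surj : Surjective res) {i₀ : σ} {w : σ → k}
    (hw₀ : w i₀ = 1) : ∃ t : unitChart K i₀, residue O res ∘ t.1 = w := by
  classical
  choose z hz using fun i ↦ hres_surj (w i)
  refine ⟨⟨update (fun i ↦ (z i : K)) i₀ 1, by simp,
    (pi_norm_le_iff_of_nonneg zero_le_one).2 fun i ↦ ?_⟩, funext fun i ↦ ?_⟩ <;>
    rcases eq_or_ne i i₀ with rfl | hi
  · simp
  · simp [hi, ← hO]
  · simp [hw₀, residue_one]
  · simp [hi, residue_of_mem (z i).2, hz]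

variable {N : ℕ}

lemma redTo_toProj {i₀ : Fin (N + 1)} (v : unitChart K i₀) {w : Fin (N + 1) → k} (hw : w ≠ 0)
    (hvw : residue O res ∘ v.1 = w) :
    RedTo O hO res (unitChart.toProj v) (Projectivization.mk k w hw) := by
  obtain ⟨v, hv₀, hv⟩ := v
  have hle i : ‖v i‖ ≤ 1 := (norm_le_pi_norm v i).trans hv
  have hres : (fun i ↦ res ⟨v i, (hO (v i)).mpr (hle i)⟩) = w := by
    rw [← hvw]
    exact funext fun i ↦ (residue_of_mem _).symm
  exact ⟨v, _, hle, ⟨i₀, by rw [hv₀, norm_one]⟩, rfl, hres ▸ hw,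
    (Projectivization.mk_eq_mk_iff' k _ _ _ _).2 ⟨1, by rw [one_smul, hres]⟩⟩

lemma exists_toProj_eq_of_redTo (hres_ker : ∀ z : O, res z = 0 ↔ ‖(z : K)‖ < 1)
    {i₀ : Fin (N + 1)} {w : Fin (N + 1) → k} (hw : w ≠ 0) (hw₀ : w i₀ = 1)
    {x : ℙ K (Fin (N + 1) → K)} (hx : RedTo O hO res x (Projectivization.mk k w hw)) :
    ∃ v : unitChart K i₀, residue O res ∘ v.1 = w ∧ x = unitChart.toProj v := by
  obtain ⟨u, hu, hle, -, rfl, hw', hy⟩ := hx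
  obtain ⟨a, ha⟩ := (Projectivization.mk_eq_mk_iff' k _ _ _ _).1 hy
  have hres i : a * residue O res (u i) = w i := by
    rw [residue_of_mem ((hO _).2 (hle i))]
    exact congrFun ha i
  have hu₀ : ‖u i₀‖ = 1 := by
    refine (hle i₀).antisymm (not_lt.1 fun hlt ↦ ?_)
    have h := hres i₀
    rw [hw₀, residue_of_mem ((hO _).2 (hle i₀)), (hres_ker _).2 hlt, mul_zero] at h
    exact zero_ne_one h
  have hu₀' : u i₀ ≠ 0 := norm_ne_zero_iff.1 (hu₀ ▸ one_ne_zero)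
  have hinv : residue O res (u i₀)⁻¹ = a := by
    rw [residue_inv hO hu₀]
    exact (eq_inv_of_mul_eq_one_left (hw₀ ▸ hres i₀)).symm
  refine ⟨⟨(u i₀)⁻¹ • u, inv_mul_cancel₀ hu₀', ?_⟩, funext fun i ↦ ?_, ?_⟩
  · rw [norm_smul, norm_inv, hu₀, inv_one, one_mul]
    exact (pi_norm_le_iff_of_nonneg zero_le_one).2 hle
  · change residue O res ((u i₀)⁻¹ * u i) = w i
    rw [residue_mul ((hO _).2 (by simp [hu₀])) ((hO _).2 (hle i)), hinv, hres]
  · exact (Projectivization.mk_eq_mk_iff' K _ _ _ _).2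
      ⟨u i₀, by rw [smul_smul, mul_inv_cancel₀ hu₀', one_smul]⟩

variable [IsUltrametricDist K] (hres_ker : ∀ z : O, res z = 0 ↔ ‖(z : K)‖ < 1) {q : ℕ} {π : K}
  {P : σ → MvPolynomial σ K}

include hO hres_ker in
lemma residue_frobeniusLift_apply (hπ : ‖π‖ < 1) (hP : ∀ i m, ‖(P i).coeff m‖ ≤ 1)
    {v : σ → K} (hv : ‖v‖ ≤ 1) (i : σ) :
    residue O res (frobeniusLift q π P v i) = residue O res (v i) ^ q := by
  have hvi : v i ∈ O := (hO _).2 ((norm_le_pi_norm v i).trans hv)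
  rw [← residue_pow hvi, residue_eq_residue_iff hres_ker ((hO _).2 ((pi_norm_le_iff_of_nonneg
    zero_le_one).1 (norm_frobeniusLift_le hπ.le hP hv) i)) (O.pow_mem hvi q), frobeniusLift,
    add_sub_cancel_left]
  exact (norm_mul_le _ _).trans_lt (mul_lt_one_of_nonneg_of_lt_one_left (norm_nonneg _) hπ
    (IsUltrametricDist.norm_eval_le_one (hP i) hv))

include hO hres_ker in
lemma semiconj_residue_chartFrobeniusLift (hπ : ‖π‖ < 1) (hP : ∀ i m, ‖(P i).coeff m‖ ≤ 1)
    (i₀ : σ) : Semiconj (fun v : unitChart K i₀ ↦ residue O res ∘ v.1)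
      ((mapsTo_chartFrobeniusLift (q := q) hπ hP i₀).restrict _ _ _) (· ^ q) := by
  rintro ⟨v, hv₀, hv⟩
  have h₀ := norm_frobeniusLift_apply_eq_one (q := q) hπ hP hv (by rw [hv₀, norm_one])
  have hres₀ : residue O res (frobeniusLift q π P v i₀) = 1 := by
    rw [residue_frobeniusLift_apply hO hres_ker hπ hP hv, hv₀, residue_one, one_pow]
  funext i
  simp only [MapsTo.val_restrict_apply, comp_apply, chartFrobeniusLift, Pi.smul_apply,
    smul_eq_mul, Pi.pow_apply]
  rw [residue_mul ((hO _).2 (by rw [norm_inv, h₀, inv_one]))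
    ((hO _).2 ((norm_le_pi_norm _ i).trans (norm_frobeniusLift_le hπ.le hP hv))),
    residue_inv hO h₀, hres₀, inv_one, one_mul, residue_frobeniusLift_apply hO hres_ker hπ hP hv]

end ChartResidue

lemma exists_pow_pow_eq_self_of_isAlgebraic {p : ℕ} [Fact p.Prime] {k : Type*} [Field k]
    [Algebra (ZMod p) k] {a : k} (ha : IsAlgebraic (ZMod p) a) : ∃ m, 0 < m ∧ a ^ p ^ m = a := by
  open IntermediateField in
  have : FiniteDimensional (ZMod p) (ZMod p)⟮a⟯ := adjoin.finiteDimensional ha.isIntegral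
  have : Finite (ZMod p)⟮a⟯ := Module.finite_of_finite (ZMod p)
  let : Fintype (ZMod p)⟮a⟯ := Fintype.ofFinite _
  have : CharP (ZMod p)⟮a⟯ p :=
    charP_of_injective_algebraMap (algebraMap (ZMod p) (ZMod p)⟮a⟯).injective p
  obtain ⟨m, -, hcard⟩ := FiniteField.card (ZMod p)⟮a⟯ p
  refine ⟨m, m.pos, ?_⟩
  simpa [hcard] using congrArg Subtype.val (FiniteField.pow_card (AdjoinSimple.gen (ZMod p) a))

lemma exists_isPeriodicPt_pow_pow {M : Type*} [Monoid M] {p : ℕ}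
    (h : ∀ a : M, ∃ m, 0 < m ∧ a ^ p ^ m = a) {σ : Type*} [Fintype σ] (s : ℕ) (w : σ → M) :
    ∃ n, 0 < n ∧ Function.IsPeriodicPt (· ^ p ^ s) n w := by
  choose m hm₀ hm using fun i ↦ h (w i)
  refine ⟨∏ i, m i, Finset.prod_pos fun i _ ↦ hm₀ i, funext fun i ↦ ?_⟩
  have hi : Function.IsPeriodicPt (· ^ p) (m i) (w i) := by
    simpa [Function.IsPeriodicPt, Function.IsFixedPt, pow_iterate] using hm i
  have := hi.trans_dvd (dvd_mul_of_dvd_right (Finset.dvd_prod_of_mem m (Finset.mem_univ i)) s)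
  simpa [Function.IsPeriodicPt, Function.IsFixedPt, pow_iterate, ← pow_mul] using this

section Padic

open Polynomial

variable {p : ℕ} [Fact p.Prime]

lemma Polynomial.exists_padicInt_map_eq_C_mul {g : ℚ_[p][X]} (hg : g ≠ 0) :
    ∃ (f : ℤ_[p][X]) (c : ℚ_[p]), f.map PadicInt.Coe.ringHom = C c * g ∧ ∃ j, f.coeff j = 1 := by
  obtain ⟨j, hj, hmax⟩ :=
    Finset.exists_max_image g.support (‖g.coeff ·‖) (support_nonempty.2 hg)
  have hj0 : g.coeff j ≠ 0 := mem_support_iff.1 hj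
  have hcoeff i : ‖(C (g.coeff j)⁻¹ * g).coeff i‖ ≤ 1 := by
    rw [coeff_C_mul, norm_mul, norm_inv, inv_mul_le_one₀ (norm_pos_iff.2 hj0)]
    by_cases hi : g.coeff i = 0
    · simp [hi]
    · exact hmax i (mem_support_iff.2 hi)
  obtain ⟨f, hf⟩ := (mem_lifts _).1 ((lifts_iff_coeff_lifts (f := PadicInt.Coe.ringHom)
    (C (g.coeff j)⁻¹ * g)).2 fun i ↦ ⟨(⟨_, hcoeff i⟩ : ℤ_[p]), rfl⟩)
  refine ⟨f, _, hf, j, ?_⟩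
  have h := congrArg (·.coeff j) hf
  rw [coeff_map, coeff_C_mul, inv_mul_cancel₀ hj0] at h
  exact Subtype.ext h

lemma PadicInt.ringHom_eq_algebraMap_comp_toZMod {k : Type*} [CommRing k] [Algebra (ZMod p) k]
    (ψ : ℤ_[p] →+* k) (hψ : ψ p = 0) : ψ = (algebraMap (ZMod p) k).comp PadicInt.toZMod := by
  have hker : RingHom.ker PadicInt.toZMod ≤ RingHom.ker ψ := by
    rw [PadicInt.ker_toZMod, PadicInt.maximalIdeal_eq_span_p, Ideal.span_le,
      Set.singleton_subset_iff]
    exact hψ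
  have h := RingHom.liftOfSurjective_comp _ (ZMod.ringHom_surjective PadicInt.toZMod) ⟨ψ, hker⟩
  rwa [Subsingleton.elim (RingHom.liftOfSurjective _ _ _) (algebraMap (ZMod p) k), eq_comm] at h

namespace IsCp

variable {K : Type*} [NormedField K] [Algebra ℚ_[p] K] (hK : IsCp p K) {O : Subring K}
  {k : Type*} [Field k] {res : O →+* k} (hres_ker : ∀ z : O, res z = 0 ↔ ‖(z : K)‖ < 1)
include hK

lemma norm_natCast_p_lt_one : ‖(p : K)‖ < 1 := by
  rw [← map_natCast (algebraMap ℚ_[p] K), hK.isometry, Padic.norm_p]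
  exact inv_lt_one_of_one_lt₀ (by exact_mod_cast (Fact.out : p.Prime).one_lt)

include hres_ker

lemma charP_residueField : CharP k p :=
  (CharP.charP_iff_prime_eq_zero Fact.out).2 (by
    rw [← map_natCast res p]
    exact (hres_ker _).2 (by simpa using hK.norm_natCast_p_lt_one))

variable (hO : ∀ z : K, z ∈ O ↔ ‖z‖ ≤ 1)
include hO

lemma isAlgebraic_residue [Algebra (ZMod p) k] {t : K} (ht : t ∈ O)
    (halg : IsAlgebraic ℚ_[p] t) : IsAlgebraic (ZMod p) (residue O res t) := by
  -- reduce a `ℤ_p`-multiple `f` of a relation `g(t) = 0` having a coefficient `1`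
  obtain ⟨g, hg, hgt⟩ := halg
  obtain ⟨f, c, hf, j, hfj⟩ := exists_padicInt_map_eq_C_mul hg
  let ι : ℤ_[p] →+* O := ((algebraMap ℚ_[p] K).comp PadicInt.Coe.ringHom).codRestrict O
    fun x ↦ (hO _).2 (by rw [RingHom.comp_apply, hK.isometry]; exact x.norm_le_one)
  have hι : res.comp ι = (algebraMap (ZMod p) k).comp PadicInt.toZMod :=
    PadicInt.ringHom_eq_algebraMap_comp_toZMod _ (by
      rw [RingHom.comp_apply, map_natCast, map_natCast]
      exact (hK.charP_residueField hres_ker).cast_eq_zero)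
  have hroot : f.eval₂ ι ⟨t, ht⟩ = 0 := by
    apply Subtype.val_injective
    change O.subtype _ = 0
    rw [Polynomial.hom_eval₂, show O.subtype.comp ι = (algebraMap ℚ_[p] K).comp
      PadicInt.Coe.ringHom from rfl, ← Polynomial.eval₂_map, ← Polynomial.aeval_def, hf]
    simp [hgt]
  refine ⟨f.map PadicInt.toZMod, fun h ↦ by simpa [hfj] using congrArg (·.coeff j) h, ?_⟩
  rw [Polynomial.aeval_def, Polynomial.eval₂_map, ← hι, residue_of_mem ht,
    ← Polynomial.hom_eval₂, hroot, map_zero]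

lemma exists_isAlgebraic_residue_eq (hres_surj : Function.Surjective res) (a : k) :
    ∃ t ∈ O, IsAlgebraic ℚ_[p] t ∧ residue O res t = a := by
  obtain ⟨z, rfl⟩ := hres_surj a
  obtain ⟨t, halg, hzt⟩ := hK.denseAlgebraic z 1 one_pos
  have ht : t ∈ O := (hO _).2 (by
    simpa using (hK.nonarch z (t - z)).trans
      (max_le ((hO _).1 z.2) (norm_sub_rev (z : K) t ▸ hzt.le)))
  refine ⟨t, ht, halg, ?_⟩
  exact ((residue_eq_residue_iff hres_ker ht z.2).2 (by rwa [norm_sub_rev])).trans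
    (residue_of_mem z.2)

lemma exists_pow_pow_eq_self_of_residueField (hres_surj : Function.Surjective res) (a : k) :
    ∃ m, 0 < m ∧ a ^ p ^ m = a := by
  have := hK.charP_residueField hres_ker
  let := ZMod.algebra k p
  obtain ⟨t, ht, halg, rfl⟩ := hK.exists_isAlgebraic_residue_eq hres_ker hO hres_surj a
  exact exists_pow_pow_eq_self_of_isAlgebraic (hK.isAlgebraic_residue hres_ker hO ht halg)

end IsCp

end Padic

theorem reduction_bijective_on_periodic_lift_of_frobenius_general
    {p : ℕ} [Fact p.Prime] {K : Type*} [NormedField K] [Algebra ℚ_[p] K] (hK : IsCp p K)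
    {N : ℕ} (s : ℕ) (hs : 1 ≤ s)
    (P : Fin (N + 1) → MvPolynomial (Fin (N + 1)) K)
    (hPint : ∀ i m, ‖(P i).coeff m‖ ≤ 1)
    (F : ℙ K (Fin (N + 1) → K) → ℙ K (Fin (N + 1) → K))
    (hFnz : ∀ v : Fin (N + 1) → K, v ≠ 0 →
      (fun i => v i ^ p ^ s + (p : K) * MvPolynomial.eval v (P i)) ≠ 0)
    (hF : ∀ (v : Fin (N + 1) → K) (hv : v ≠ 0),
      F (Projectivization.mk K v hv) =
        Projectivization.mk K (fun i => v i ^ p ^ s + (p : K) * MvPolynomial.eval v (P i))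
          (hFnz v hv))
    (Per : Set (ℙ K (Fin (N + 1) → K)))
    (hPer : ∀ x, x ∈ Per ↔ ∃ n, 1 ≤ n ∧ F^[n] x = x)
    (O : Subring K) (hO : ∀ z : K, z ∈ O ↔ ‖z‖ ≤ 1)
    (kbar : Type*) [Field kbar] (res : O →+* kbar)
    (hres_surj : Function.Surjective res)
    (hres_ker : ∀ z : O, res z = 0 ↔ ‖(z : K)‖ < 1) :
    ∀ y : ℙ kbar (Fin (N + 1) → kbar), ∃! x, x ∈ Per ∧ RedTo O hO res x y := by
  have : IsUltrametricDist K := .isUltrametricDist_of_forall_norm_add_le_max_norm hK.nonarch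
  have := hK.complete
  have hp := hK.norm_natCast_p_lt_one
  have hq : ‖((p ^ s : ℕ) : K)‖ ≤ ‖(p : K)‖ := by
    rw [Nat.cast_pow, norm_pow]
    exact pow_le_of_le_one (norm_nonneg _) hp.le (by omega)
  intro y
  obtain ⟨i₀, w, hw, hw₀, rfl⟩ := Projectivization.exists_eq_mk_apply_eq_one y
  have hG := shrinksSmallDist_chartFrobeniusLift hq le_rfl hp hPint i₀
  have hproj := semiconj_toProj_chartFrobeniusLift hF hp hPint i₀
  have hres := semiconj_residue_chartFrobeniusLift (q := p ^ s) hO hres_ker hp hPint i₀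
  have hdist (u v : unitChart K i₀) : residue O res ∘ u.1 = residue O res ∘ v.1 ↔ dist u v < 1 :=
    residue_comp_eq_iff_dist_lt_one hO hres_ker u.2.2 v.2.2
  obtain ⟨t, rfl⟩ := exists_residue_comp_eq hO hres_surj hw₀
  obtain ⟨n, hn, hwn⟩ := exists_isPeriodicPt_pow_pow
    (hK.exists_pow_pow_eq_self_of_residueField hres_ker hO hres_surj) s (residue O res ∘ t.1)
  obtain ⟨x, hx, hxt⟩ := (hG.iterate hp.le hn.ne').exists_isFixedPt hp
    ((hdist _ _).1 ((hres.iterate_right n t).trans hwn))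
  refine ⟨unitChart.toProj x, ⟨(hPer _).2 ⟨n, hn, Function.IsPeriodicPt.map hx hproj⟩,
    redTo_toProj hO x hw ((hdist x t).2 hxt)⟩, ?_⟩
  rintro _ ⟨hvPer, hvRed⟩
  obtain ⟨v, hvt, rfl⟩ := exists_toProj_eq_of_redTo hO hres_ker hw hw₀ hvRed
  obtain ⟨m, hm, hvm⟩ := (hPer _).1 hvPer
  have hv : Function.IsPeriodicPt _ m v :=
    unitChart.toProj_injective i₀ ((hproj.iterate_right m v).trans hvm)
  exact congrArg _ ((hG.iterate hp.le (mul_ne_zero (by omega) hn.ne')).eq_of_isFixedPt hp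
    (hv.mul_const n) (Function.IsPeriodicPt.const_mul hx m)
    ((hdist v x).1 (hvt.trans ((hdist x t).2 hxt).symm)))

/-- **Reduction is a bijection on periodic points.** The reduction map
`red : ℙ^N(ℂ_p) → ℙ^N(k̄)` restricts to a bijection from the set of periodic points of a lift of
Frobenius onto `ℙ^N(k̄)`: every fiber of `red` contains exactly one periodic point. -/
theorem reduction_bijective_on_periodic_lift_of_frobenius
    {p : ℕ} [Fact p.Prime] {K : Type*} [NormedField K] [Algebra ℚ_[p] K] (hK : IsCp p K)
    {N : ℕ} (s : ℕ) (hs : 1 ≤ s)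
    (P : Fin (N + 1) → MvPolynomial (Fin (N + 1)) K)
    (hPhom : ∀ i, (P i).IsHomogeneous (p ^ s))
    (hPint : ∀ i m, ‖(P i).coeff m‖ ≤ 1)
    (F : ℙ K (Fin (N + 1) → K) → ℙ K (Fin (N + 1) → K))
    (hFnz : ∀ v : Fin (N + 1) → K, v ≠ 0 →
      (fun i => v i ^ p ^ s + (p : K) * MvPolynomial.eval v (P i)) ≠ 0)
    (hF : ∀ (v : Fin (N + 1) → K) (hv : v ≠ 0),
      F (Projectivization.mk K v hv) =
        Projectivization.mk K (fun i => v i ^ p ^ s + (p : K) * MvPolynomial.eval v (P i))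
          (hFnz v hv))
    (Per : Set (ℙ K (Fin (N + 1) → K)))
    (hPer : ∀ x, x ∈ Per ↔ ∃ n, 1 ≤ n ∧ F^[n] x = x)
    (O : Subring K) (hO : ∀ z : K, z ∈ O ↔ ‖z‖ ≤ 1)
    (kbar : Type*) [Field kbar] (res : O →+* kbar)
    (hres_surj : Function.Surjective res)
    (hres_ker : ∀ z : O, res z = 0 ↔ ‖(z : K)‖ < 1) :
    ∀ y : ℙ kbar (Fin (N + 1) → kbar), ∃! x, x ∈ Per ∧ RedTo O hO res x y :=
  reduction_bijective_on_periodic_lift_of_frobenius_general hK s hs P hPint F hFnz hF Per hPer O hO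
    kbar res hres_surj hres_ker
end
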